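/- arXiv:1503.00337 — 3 statements merged into one kernel-verified Lean document; each statement's English description precedes it below -/
import Mathlib

section
/- Let n be a natural number and let b, c : Fin n → Fin n → Fin n → ℝ be two tensors. Suppose that for every O(n)-invariant polynomial p in the variables indexed by Fin n × Fin n × Fin n with real coefficients one has eval b p = eval c p. Then there exists an orthogonal matrix U (real n×n matrix with UᵀU = 1) such that b = U • c, where (U • c) i j k = ∑_{a,b',d} U i a * U j b' * U k d * c a b' d. -/
/-- A real `n × n` matrix is orthogonal if `Uᵀ * U = 1`. -/
def IsOrthogonal {n : ℕ} (U : Matrix (Fin n) (Fin n) ℝ) : Prop :=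
  U.transpose * U = 1

/-- The action of an `n × n` matrix `U` on a tensor `c : Fin n → Fin n → Fin n → ℝ`:
`(U • c) i j k = ∑ a b d, U i a * U j b * U k d * c a b d`. -/
def matAct {n : ℕ} (U : Matrix (Fin n) (Fin n) ℝ) (c : Fin n → Fin n → Fin n → ℝ) :
    Fin n → Fin n → Fin n → ℝ :=
  fun i j k => ∑ a, ∑ b, ∑ d, U i a * U j b * U k d * c a b d

/-- Evaluation of a polynomial in the variables `Fin n × Fin n × Fin n` at a tensor. -/
noncomputable def evalTensor {n : ℕ} (c : Fin n → Fin n → Fin n → ℝ)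
    (p : MvPolynomial (Fin n × Fin n × Fin n) ℝ) : ℝ :=
  MvPolynomial.eval (fun v => c v.1 v.2.1 v.2.2) p

/-!
If `b` is not in the `O(n)`-orbit of `c`, the two orbits are disjoint compact sets, so by Urysohn
and Stone–Weierstrass some polynomial `q` is `> 2/3` on one orbit and `< 1/3` on the other.
Averaging `q` over the Haar measure of `O(n)` gives an invariant polynomial (its coefficients are
integrals of continuous functions on the group) which still separates `b` from `c`.
-/

open MvPolynomial MeasureTheory Matrix
open scoped Kronecker

namespace MvPolynomial

variable {σ : Type*}

theorem exists_eval_eq_integral {T : Type*} [MeasurableSpace T] (μ : Measure T)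
    (F : T → MvPolynomial σ ℝ) (S : Finset (σ →₀ ℕ)) (hS : ∀ t, (F t).support ⊆ S)
    (hF : ∀ m, Integrable (fun t => coeff m (F t)) μ) :
    ∃ p : MvPolynomial σ ℝ, ∀ x, eval x p = ∫ t, eval x (F t) ∂μ := by
  refine ⟨∑ m ∈ S, monomial m (∫ t, coeff m (F t) ∂μ), fun x => ?_⟩
  have eval_F : ∀ t, eval x (F t) = ∑ m ∈ S, coeff m (F t) * ∏ i ∈ m.support, x i ^ m i :=
    fun t => (eval_eq x (F t)).trans <| Finset.sum_subset (hS t) fun m _ hm => by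
      rw [notMem_support_iff.mp hm, zero_mul]
  simp only [eval_F, map_sum, eval_monomial]
  rw [integral_finsetSum _ fun m _ => (hF m).mul_const _]
  simp only [integral_mul_const, Finsupp.prod]

theorem exists_eval_near_of_isCompact {K : Set (σ → ℝ)} (hK : IsCompact K)
    {f : (σ → ℝ) → ℝ} (hf : ContinuousOn f K) {ε : ℝ} (hε : 0 < ε) :
    ∃ p : MvPolynomial σ ℝ, ∀ x ∈ K, |eval x p - f x| < ε := by
  have := isCompact_iff_compactSpace.mp hK
  let coord : σ → C(K, ℝ) := fun i =>
    ⟨fun x => (x : σ → ℝ) i, (continuous_apply i).comp continuous_subtype_val⟩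
  have aeval_coord : ∀ (p : MvPolynomial σ ℝ) (x : K), aeval coord p x = eval (x : σ → ℝ) p :=
    fun p x => by induction p using MvPolynomial.induction_on <;> simp_all [coord]
  have hsep : (aeval (R := ℝ) coord).range.SeparatesPoints := by
    intro x y hxy
    obtain ⟨i, hi⟩ := Function.ne_iff.mp (Subtype.coe_ne_coe.mpr hxy)
    exact ⟨_, ⟨coord i, ⟨X i, aeval_X _ _⟩, rfl⟩, hi⟩
  obtain ⟨⟨_, p, rfl⟩, hp⟩ :=
    ContinuousMap.exists_mem_subalgebra_near_continuous_of_separatesPoints _ hsep _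
      hf.domRestrict ε hε
  exact ⟨p, fun x hx => by simpa [aeval_coord] using hp ⟨x, hx⟩⟩

theorem exists_eval_separating_of_isCompact [Fintype σ] {K L : Set (σ → ℝ)} (hK : IsCompact K)
    (hL : IsCompact L) (hKL : Disjoint K L) :
    ∃ q : MvPolynomial σ ℝ, (∀ x ∈ K, 2 / 3 < eval x q) ∧ ∀ x ∈ L, eval x q < 1 / 3 := by
  obtain ⟨f, hfL, hfK, -⟩ :=
    exists_continuous_zero_one_of_isClosed hL.isClosed hK.isClosed hKL.symm
  obtain ⟨q, hq⟩ := exists_eval_near_of_isCompact (hK.union hL) f.continuous.continuousOn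
    (by norm_num : (0 : ℝ) < 1 / 3)
  refine ⟨q, fun x hx => ?_, fun x hx => ?_⟩
  · have := hq x (.inl hx)
    rw [hfK hx, Pi.one_apply] at this
    linarith [abs_lt.mp this]
  · have := hq x (.inr hx)
    rw [hfL hx, Pi.zero_apply] at this
    linarith [abs_lt.mp this]

variable [Fintype σ]

noncomputable def linearSubst (A : Matrix σ σ ℝ) : MvPolynomial σ ℝ →ₐ[ℝ] MvPolynomial σ ℝ :=
  aeval fun i => ∑ j, C (A i j) * X j

theorem linearSubst_X (A : Matrix σ σ ℝ) (i : σ) :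
    linearSubst A (X i) = ∑ j, C (A i j) * X j :=
  aeval_X _ i

theorem eval_linearSubst (A : Matrix σ σ ℝ) (x : σ → ℝ) (q : MvPolynomial σ ℝ) :
    eval x (linearSubst A q) = eval (A *ᵥ x) q := by
  rw [linearSubst, aeval_eq_bind₁, eval, eval₂Hom_bind₁]
  show eval _ q = eval _ q
  congr 2
  funext i
  simp [mulVec, dotProduct]

theorem totalDegree_linearSubst_le (A : Matrix σ σ ℝ) (q : MvPolynomial σ ℝ) :
    (linearSubst A q).totalDegree ≤ q.totalDegree := by
  conv_lhs => rw [← sum_homogeneousComponent q]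
  rw [map_sum]
  refine (totalDegree_finsetSum _ _).trans (Finset.sup_le fun d hd => ?_)
  have hlin : ∀ i, (∑ j, C (A i j) * X j : MvPolynomial σ ℝ).IsHomogeneous 1 := fun i =>
    IsHomogeneous.sum _ _ _ fun j _ => isHomogeneous_C_mul_X _ _
  have := ((homogeneousComponent_isHomogeneous d q).aeval _ hlin).totalDegree_le
  rw [one_mul] at this
  exact this.trans (Nat.lt_succ_iff.mp (Finset.mem_range.mp hd))

theorem continuous_coeff_linearSubst {T : Type*} [TopologicalSpace T] {A : T → Matrix σ σ ℝ}
    (hA : Continuous A) (q : MvPolynomial σ ℝ) (m : σ →₀ ℕ) :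
    Continuous fun t => coeff m (linearSubst (A t) q) := by
  classical
  induction q using MvPolynomial.induction_on generalizing m with
  | C a => simpa [linearSubst] using continuous_const
  | add p r hp hr =>
    simp only [map_add, coeff_add]
    exact (hp m).add (hr m)
  | mul_X p i hp =>
    simp only [map_mul, linearSubst_X, Finset.mul_sum, coeff_sum, mul_left_comm _ (C _),
      coeff_C_mul, coeff_mul_X']
    refine continuous_finsetSum _ fun j _ => (hA.matrix_elem i j).mul ?_
    split_ifs
    · exact hp _
    · exact continuous_const

theorem exists_eval_eq_integral_eval_mulVec {T : Type*} [TopologicalSpace T] [CompactSpace T]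
    [MeasurableSpace T] [OpensMeasurableSpace T] (μ : Measure T) [IsFiniteMeasure μ]
    {A : T → Matrix σ σ ℝ} (hA : Continuous A) (q : MvPolynomial σ ℝ) :
    ∃ p : MvPolynomial σ ℝ, ∀ x, eval x p = ∫ t, eval (A t *ᵥ x) q ∂μ := by
  obtain ⟨p, hp⟩ := exists_eval_eq_integral μ (fun t => linearSubst (A t) q)
    (Finsupp.finite_of_degree_le q.totalDegree).toFinset
    (fun t m hm => (Set.Finite.mem_toFinset _).mpr <|
      (le_totalDegree hm).trans (totalDegree_linearSubst_le _ q))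
    (fun m => (continuous_coeff_linearSubst hA q m).integrable_of_hasCompactSupport
      (.of_compactSpace _))
  exact ⟨p, fun x => by simp only [hp, eval_linearSubst]⟩

end MvPolynomial

section Invariants

variable {G σ : Type*} [Group G] [Fintype σ] [DecidableEq σ]

theorem disjoint_range_mulVec (ρ : G →* Matrix σ σ ℝ) {x y : σ → ℝ}
    (hxy : ∀ g, ρ g *ᵥ y ≠ x) :
    Disjoint (Set.range fun g => ρ g *ᵥ x) (Set.range fun g => ρ g *ᵥ y) := by
  refine Set.disjoint_left.mpr ?_
  rintro - ⟨g, rfl⟩ ⟨h, hgh⟩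
  refine hxy (g⁻¹ * h) ?_
  rw [map_mul, ← mulVec_mulVec, show ρ h *ᵥ y = ρ g *ᵥ x from hgh, mulVec_mulVec, ← map_mul,
    inv_mul_cancel, map_one, one_mulVec]

variable [TopologicalSpace G] [CompactSpace G] [MeasurableSpace G] [OpensMeasurableSpace G]
  [MeasurableMul G]

theorem exists_invariant_eval_eq_integral (μ : Measure G) [IsFiniteMeasure μ]
    [μ.IsMulRightInvariant] {ρ : G →* Matrix σ σ ℝ} (hρ : Continuous ρ) (q : MvPolynomial σ ℝ) :
    ∃ p : MvPolynomial σ ℝ, (∀ g z, eval (ρ g *ᵥ z) p = eval z p) ∧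
      ∀ z, eval z p = ∫ g, eval (ρ g *ᵥ z) q ∂μ := by
  obtain ⟨p, hp⟩ := exists_eval_eq_integral_eval_mulVec μ hρ q
  refine ⟨p, fun h z => ?_, hp⟩
  simp only [hp, mulVec_mulVec, ← map_mul]
  exact integral_mul_right_eq_self (fun g => eval (ρ g *ᵥ z) q) h

theorem exists_invariant_eval_ne (μ : Measure G) [IsFiniteMeasure μ] [NeZero μ]
    [μ.IsMulRightInvariant] {ρ : G →* Matrix σ σ ℝ} (hρ : Continuous ρ) {x y : σ → ℝ}
    (hxy : ∀ g, ρ g *ᵥ y ≠ x) :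
    ∃ p : MvPolynomial σ ℝ, (∀ g z, eval (ρ g *ᵥ z) p = eval z p) ∧ eval x p ≠ eval y p := by
  have continuous_orbit : ∀ z : σ → ℝ, Continuous fun g => ρ g *ᵥ z := fun z =>
    hρ.matrix_mulVec continuous_const
  obtain ⟨q, hqx, hqy⟩ := exists_eval_separating_of_isCompact
    (isCompact_range (continuous_orbit x)) (isCompact_range (continuous_orbit y))
    (disjoint_range_mulVec ρ hxy)
  obtain ⟨p, hp_inv, hp⟩ := exists_invariant_eval_eq_integral μ hρ q
  have integrable_orbit : ∀ z, Integrable (fun g => eval (ρ g *ᵥ z) q) μ := fun z =>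
    ((continuous_eval q).comp (continuous_orbit z)).integrable_of_hasCompactSupport
      (.of_compactSpace _)
  refine ⟨p, hp_inv, ne_of_gt ?_⟩
  rw [hp, hp]
  calc ∫ g, eval (ρ g *ᵥ y) q ∂μ
      ≤ ∫ _, 1 / 3 ∂μ := integral_mono (integrable_orbit y) (integrable_const _)
        fun g => (hqy _ ⟨g, rfl⟩).le
    _ < ∫ _, 2 / 3 ∂μ := by
        simp only [integral_const, smul_eq_mul]
        gcongr
        · exact measureReal_univ_pos
        · norm_num
    _ ≤ ∫ g, eval (ρ g *ᵥ x) q ∂μ := integral_mono (integrable_const _) (integrable_orbit x)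
        fun g => (hqx _ ⟨g, rfl⟩).le

end Invariants

namespace Matrix

theorem isCompact_orthogonalGroup (ι : Type*) [Fintype ι] [DecidableEq ι] :
    IsCompact (orthogonalGroup ι ℝ : Set (Matrix ι ι ℝ)) := by
  refine (isCompact_univ_pi fun _ => isCompact_univ_pi fun _ =>
    isCompact_closedBall (0 : ℝ) 1).of_isClosed_subset
      (isClosed_unitary (R := Matrix ι ι ℝ)) fun U hU => ?_
  simpa using entry_norm_bound_of_unitary hU

instance (ι : Type*) [Fintype ι] [DecidableEq ι] : CompactSpace (orthogonalGroup ι ℝ) :=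
  isCompact_iff_compactSpace.mp (isCompact_orthogonalGroup ι)

def kroneckerCubeHom (ι R : Type*) [Fintype ι] [DecidableEq ι] [CommSemiring R] :
    Matrix ι ι R →* Matrix (ι × ι × ι) (ι × ι × ι) R where
  toFun U := U ⊗ₖ (U ⊗ₖ U)
  map_one' := by simp only [one_kronecker_one]
  map_mul' U V := by simp only [mul_kronecker_mul]

theorem continuous_kroneckerCubeHom (ι : Type*) [Fintype ι] [DecidableEq ι] :
    Continuous (kroneckerCubeHom ι ℝ) :=
  continuous_matrix fun _ _ =>
    (continuous_id.matrix_elem _ _).mul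
      ((continuous_id.matrix_elem _ _).mul (continuous_id.matrix_elem _ _))

end Matrix

theorem matAct_eq_kroneckerCubeHom_mulVec {n : ℕ} (U : Matrix (Fin n) (Fin n) ℝ)
    (c : Fin n → Fin n → Fin n → ℝ) :
    (fun v : Fin n × Fin n × Fin n => matAct U c v.1 v.2.1 v.2.2) =
      kroneckerCubeHom (Fin n) ℝ U *ᵥ fun v => c v.1 v.2.1 v.2.2 := by
  ext v
  simp [kroneckerCubeHom, matAct, mulVec, dotProduct, Fintype.sum_prod_type, mul_assoc]

theorem stmt1 (n : ℕ) (b c : Fin n → Fin n → Fin n → ℝ)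
    (h : ∀ p : MvPolynomial (Fin n × Fin n × Fin n) ℝ,
      (∀ (U : Matrix (Fin n) (Fin n) ℝ) (x : Fin n → Fin n → Fin n → ℝ),
        IsOrthogonal U → evalTensor (matAct U x) p = evalTensor x p) →
      evalTensor b p = evalTensor c p) :
    ∃ U : Matrix (Fin n) (Fin n) ℝ, IsOrthogonal U ∧ b = matAct U c := by
  by_contra hne
  let G := ↥(orthogonalGroup (Fin n) ℝ)
  borelize G
  let ρ : G →* _ := (kroneckerCubeHom (Fin n) ℝ).comp (orthogonalGroup (Fin n) ℝ).subtype
  have hρ : Continuous ρ := (continuous_kroneckerCubeHom (Fin n)).comp continuous_subtype_val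
  -- the inverse of a left Haar measure is right-invariant
  obtain ⟨p, hp_inv, hp_ne⟩ := exists_invariant_eval_ne (Measure.haar : Measure G).inv hρ
    (x := fun v => b v.1 v.2.1 v.2.2) (y := fun v => c v.1 v.2.1 v.2.2) fun g hg =>
      hne ⟨g, (mem_orthogonalGroup_iff' _ _).mp g.2, funext₃ fun i j k =>
        (congrFun hg (i, j, k)).symm.trans
          (congrFun (matAct_eq_kroneckerCubeHom_mulVec (g : Matrix _ _ ℝ) c) (i, j, k)).symm⟩
  refine hp_ne (h p fun U x hU => ?_)
  rw [evalTensor, matAct_eq_kroneckerCubeHom_mulVec]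
  exact hp_inv ⟨U, (mem_orthogonalGroup_iff' _ _).mpr hU⟩ _
end

section
/- Let n be a natural number and let c : Fin n → Fin n → Fin n → ℝ be cyclically invariant, i.e. c i j k = c j k i for all i, j, k. Then ∑_{i,j,k} c i j k * c i k j = - ∑_{i,j,k} (c i j k)^2 if and only if c is alternating, i.e. c i k j = - c i j k for all i, j, k (all sums over Fin n). -/
/-! Since `σ` permutes the index set, `∑ (f x + f (σ x))² = 2 (∑ f x f (σ x) + ∑ (f x)²)`, and a sum
of squares vanishes exactly when every term does. -/

open Finset

theorem Fintype.sum_mul_comp_equiv_eq_neg_sum_sq_iff {ι R : Type*} [Fintype ι] [CommRing R]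
    [LinearOrder R] [IsStrictOrderedRing R] (f : ι → R) (σ : ι ≃ ι) :
    ∑ x, f x * f (σ x) = -∑ x, f x ^ 2 ↔ ∀ x, f (σ x) = -f x := by
  have hsq : ∑ x, f (σ x) ^ 2 = ∑ x, f x ^ 2 := σ.sum_comp (f · ^ 2)
  have key : ∑ x, (f x + f (σ x)) ^ 2 = 2 * (∑ x, f x * f (σ x) + ∑ x, f x ^ 2) := by
    simp only [add_sq, sum_add_distrib, mul_assoc, ← mul_sum, hsq]
    ring
  have hzero : ∑ x, (f x + f (σ x)) ^ 2 = 0 ↔ ∀ x, f x + f (σ x) = 0 := by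
    simp [Fintype.sum_eq_zero_iff_of_nonneg (fun x => sq_nonneg (f x + f (σ x))), funext_iff]
  rw [← add_eq_zero_iff_eq_neg, ← mul_eq_zero_iff_left two_ne_zero, ← key, hzero]
  exact forall_congr' fun x => add_eq_zero_iff_eq_neg'

theorem stmt2_general (n : ℕ) (c : Fin n → Fin n → Fin n → ℝ) :
    (∑ i : Fin n, ∑ j : Fin n, ∑ k : Fin n, c i j k * c i k j)
        = - ∑ i : Fin n, ∑ j : Fin n, ∑ k : Fin n, (c i j k) ^ 2 ↔
      ∀ i j k, c i k j = - c i j k := by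
  have h := Fintype.sum_mul_comp_equiv_eq_neg_sum_sq_iff
    (fun x : Fin n × Fin n × Fin n => c x.1 x.2.1 x.2.2)
    ((Equiv.refl _).prodCongr (Equiv.prodComm _ _))
  simpa only [Fintype.sum_prod_type, Prod.forall, Equiv.prodCongr_apply, Equiv.coe_refl,
    Equiv.coe_prodComm, Prod.map_apply, id_eq, Prod.swap_prod_mk] using h

theorem stmt2 (n : ℕ) (c : Fin n → Fin n → Fin n → ℝ)
    (hcyc : ∀ i j k, c i j k = c j k i) :
    (∑ i : Fin n, ∑ j : Fin n, ∑ k : Fin n, c i j k * c i k j)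
        = - ∑ i : Fin n, ∑ j : Fin n, ∑ k : Fin n, (c i j k) ^ 2 ↔
      ∀ i j k, c i k j = - c i j k :=
  stmt2_general n c
end

section
/- Let k ≥ 1 and let q ∈ Q, c ∈ C and r ∈ R be permutations of Fin (6k). If q F q⁻¹ = (cr) F (cr)⁻¹, then sgn(c) = 1. -/
/-- The `i`-th element (for `i : Fin 3`) of the `j`-th block (for `j : Fin (2*k)`);
in 1-indexed labels this is the element of the block `{3j-2, 3j-1, 3j}`. -/
def blk {k : ℕ} (j : Fin (2 * k)) (i : Fin 3) : Fin (6 * k) :=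
  ⟨3 * j.val + i.val, by have := j.isLt; have := i.isLt; omega⟩

/-- The group `B = B₁B₂⋯B_{2k}`, where `B_j` is the cyclic group generated by the
3-cycle `(3j-2, 3j-1, 3j)`: on each block, `b` acts as a cyclic rotation. -/
def Bset (k : ℕ) : Set (Equiv.Perm (Fin (6 * k))) :=
  {b | ∀ j : Fin (2 * k), ∃ s : Fin 3, ∀ i : Fin 3, b (blk j i) = blk j (i + s)}

/-- The group `D` of permutations permuting the blocks while preserving positions
inside each block. -/
def Dset (k : ℕ) : Set (Equiv.Perm (Fin (6 * k))) :=
  {d | ∃ π : Equiv.Perm (Fin (2 * k)), ∀ (j : Fin (2 * k)) (i : Fin 3), d (blk j i) = blk (π j) i}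

/-- The group `Q = BD`. -/
def Qset (k : ℕ) : Set (Equiv.Perm (Fin (6 * k))) :=
  {q | ∃ b ∈ Bset k, ∃ d ∈ Dset k, q = b * d}

/-- The underlying function of the involution `F`: in 1-indexed labels it swaps
`i` and `ī = 3k + i` for `i ∈ {1, …, 3k}`. -/
def Ffun (k : ℕ) : Fin (6 * k) → Fin (6 * k) := fun a =>
  if h : a.val < 3 * k then ⟨a.val + 3 * k, by omega⟩
  else ⟨a.val - 3 * k, by have := a.isLt; omega⟩

lemma Ffun_involutive (k : ℕ) : Function.Involutive (Ffun k) := by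
  intro a
  have ha := a.isLt
  by_cases h : a.val < 3 * k
  · have h2 : ¬ (a.val + 3 * k < 3 * k) := by omega
    apply Fin.ext
    simp [Ffun, h, h2]
  · have h2 : a.val - 3 * k < 3 * k := by omega
    apply Fin.ext
    simp only [Ffun, h, h2, dif_pos, dif_neg, not_false_iff]
    omega

/-- The perfect matching `F` with edges `{i, ī}`, `i ∈ {1, …, 3k}`. -/
def Fperm (k : ℕ) : Equiv.Perm (Fin (6 * k)) :=
  Function.Involutive.toPerm (Ffun k) (Ffun_involutive k)

/-- The four first columns `K₁, K₂, K₃, K₄` of the tableau `T`: in 1-indexed labels,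
`K₁ = {3i-2 : i ∈ [k]}`, `K₂ = {(3i-2)‾ : i ∈ [k]}`, `K₃ = {3i-1 : i ∈ [k]}`,
`K₄ = {(3i-1)‾ : i ∈ [k]}`. -/
def colK (k : ℕ) : Fin 4 → Set (Fin (6 * k))
  | 0 => {a | ∃ t < k, a.val = 3 * t}
  | 1 => {a | ∃ t < k, a.val = 3 * k + 3 * t}
  | 2 => {a | ∃ t < k, a.val = 3 * t + 1}
  | 3 => {a | ∃ t < k, a.val = 3 * k + 3 * t + 1}

/-- `C_i`: the group of permutations fixing every point outside `K_i`. -/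
def Cgrp (k : ℕ) (i : Fin 4) : Set (Equiv.Perm (Fin (6 * k))) :=
  {c | ∀ a, a ∉ colK k i → c a = a}

/-- The group `C = C₁C₂C₃C₄`. -/
def Cset (k : ℕ) : Set (Equiv.Perm (Fin (6 * k))) :=
  {c | ∃ c₁ ∈ Cgrp k 0, ∃ c₂ ∈ Cgrp k 1, ∃ c₃ ∈ Cgrp k 2, ∃ c₄ ∈ Cgrp k 3,
    c = c₁ * c₂ * c₃ * c₄}

/-- The (1-indexed) row of the tableau `T` containing a given element of `Fin (6*k)`:
an element with 1-indexed core label `i ∈ {1, …, 3k}` (where the labels `i` and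
`ī = 3k + i` have core `i`) is in row 1 if `i ≤ 3` or `3 ∣ i`, and in row
`i/3 + 1` otherwise. So row 1 is `1, 1̄, 2, 2̄, 3, 3̄, 6, 6̄, …, 3k, (3k)‾` and
row `j` (for `2 ≤ j ≤ k`) is `3j-2, (3j-2)‾, 3j-1, (3j-1)‾`. -/
def rowIdx (k : ℕ) (a : Fin (6 * k)) : ℕ :=
  if a.val % (3 * k) + 1 ≤ 3 ∨ 3 ∣ (a.val % (3 * k) + 1) then 1
  else (a.val % (3 * k) + 1) / 3 + 1

/-- The group `R = R₁⋯R_k`, where `R_j` permutes the elements of row `j` of `T` and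
fixes everything else: since the rows partition `Fin (6*k)`, this is exactly the group
of permutations preserving each row of `T`. -/
def Rset (k : ℕ) : Set (Equiv.Perm (Fin (6 * k))) :=
  {r | ∀ a, rowIdx k (r a) = rowIdx k a}

/-!
Elements of `Q = BD` permute the `2k` blocks `{3j-2, 3j-1, 3j}` and rotate each of them, so
`q F q⁻¹` pairs the blocks by a fixed-point-free involution `P`, the cells of a block `x` being
matched to those of `P x` after a cyclic shift. Since `r` preserves rows and `F` swaps
`i` and `ī`, which share a row, the hypothesis says that `c⁻¹` sends this matching to one that
preserves rows. So the rows of `c⁻¹` applied to the three cells of `P x` are a rotation of those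
of `x`, and the third cell of every block is fixed by `c` and lies in row `1`.

On the column `K_i`, which meets each row once, `c` acts as a permutation `α_i` of the `k` rows,
and `sgn c = ∏ sgn α_i`. A case analysis on the three possible rotations shows that two blocks in
opposite halves whose first cells are sent by `c⁻¹` to the same row also have their second cells
sent to the same row; that is `α₂ α₁⁻¹ = α₄ α₃⁻¹`, whence `sgn c = (sgn α₃ sgn α₄)² = 1`.
-/

open Equiv Equiv.Perm

theorem Equiv.Perm.exists_sign_eq_of_fixed_off {α β : Type*}
    [Fintype α] [DecidableEq α] [Fintype β] [DecidableEq β] {p : α → Prop} [DecidablePred p]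
    (e : β ≃ Subtype p) {σ : Perm α} (hσ : ∀ a, ¬ p a → σ a = a) :
    ∃ τ : Perm β, sign τ = sign σ ∧ ∀ b, σ (e b) = e (τ b) := by
  have hmaps : ∀ a, p (σ a) ↔ p a := fun a => by
    by_cases ha : p a
    · refine iff_of_true (by_contra fun h => h ?_) ha
      rwa [σ.injective (hσ _ h)]
    · rw [hσ a ha]
  refine ⟨e.symm.permCongr (σ.subtypePerm hmaps), ?_, fun b => ?_⟩
  · rw [sign_permCongr, sign_subtypePerm]
    exact fun a ha => by_contra fun h => ha (hσ a h)
  · simp [Equiv.permCongr_apply]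

lemma map_mul_mul_mul_eq_one_of_mul_inv_eq {G : Type*} [Group G] (f : G →* ℤˣ) {a b c d : G}
    (h : a * b⁻¹ = c * d⁻¹) : f a * f b * f c * f d = 1 := by
  have hf : f a * f b = f c * f d := by
    simpa [Int.units_inv_eq_self] using congrArg f h
  rw [hf, mul_assoc, Int.units_mul_self]

lemma rotate_cases {β : Type*} {o : β} {a b : Fin 3 → β} (ha : a 2 = o) (hb : b 2 = o) {d : Fin 3}
    (hd : ∀ w, b (w + d) = a w) :
    (b 0 = a 0 ∧ b 1 = a 1) ∨ (a 1 = o ∧ b 0 = o ∧ b 1 = a 0) ∨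
      (a 0 = o ∧ b 1 = o ∧ b 0 = a 1) := by
  have h0 := hd 0; have h1 := hd 1; have h2 := hd 2
  fin_cases d <;> simp_all

/-- Blocks `x : ι` come in two sides and carry a level `lev x w` at each of three positions
`w`, the last one always at level `o`; `P` pairs each block with one on which the levels are
read off after a cyclic shift. -/
structure IsRotationMatching {ι β : Type*} (side : ι → Fin 2) (lev : ι → Fin 3 → β) (o : β)
    (P : ι → ι) : Prop where
  lev_two : ∀ x, lev x 2 = o
  injOn_zero : ∀ x y, side x = side y → lev x 0 = lev y 0 → x = y
  injOn_one : ∀ x y, side x = side y → lev x 1 = lev y 1 → x = y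
  exists_lev_zero_eq : ∀ x s, ∃ z, side z = s ∧ lev z 0 = lev x 0
  involutive : Function.Involutive P
  ne_self : ∀ x, P x ≠ x
  exists_rotate : ∀ x, ∃ d : Fin 3, ∀ w, lev (P x) (w + d) = lev x w

namespace IsRotationMatching

variable {ι β : Type*} {side : ι → Fin 2} {lev : ι → Fin 3 → β} {o : β} {P : ι → ι}

lemma partner_cases (M : IsRotationMatching side lev o P) (x : ι) :
    (lev (P x) 0 = lev x 0 ∧ lev (P x) 1 = lev x 1) ∨
      (lev x 1 = o ∧ lev (P x) 0 = o ∧ lev (P x) 1 = lev x 0) ∨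
      (lev x 0 = o ∧ lev (P x) 1 = o ∧ lev (P x) 0 = lev x 1) :=
  have ⟨_, hd⟩ := M.exists_rotate x
  rotate_cases (M.lev_two x) (M.lev_two (P x)) hd

lemma partner_eq (M : IsRotationMatching side lev o P) {x y : ι} (hside : side x ≠ side y)
    (h0 : lev x 0 = lev y 0) (hP : lev (P x) 0 = lev x 0) : P x = y := by
  have hPside : side (P x) ≠ side x := fun hs => M.ne_self x (M.injOn_zero _ _ hs hP)
  exact M.injOn_zero _ _ (by omega) (hP.trans h0)

lemma lev_one_eq_of_shift_one (M : IsRotationMatching side lev o P) {x y : ι}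
    (hside : side x ≠ side y) (h0 : lev x 0 = lev y 0)
    (hx : lev x 1 = o ∧ lev (P x) 0 = o ∧ lev (P x) 1 = lev x 0) : lev x 1 = lev y 1 := by
  obtain ⟨hx1, hPx0, hPx1⟩ := hx
  rcases M.partner_cases y with ⟨hPy0, hPy1⟩ | ⟨hy1, -, -⟩ | ⟨hy0, -, -⟩
  · rw [← M.partner_eq (Ne.symm hside) h0.symm hPy0, hPy1]
  · rw [hx1, hy1]
  · rw [← M.partner_eq hside h0 (by rw [hPx0, h0, hy0]), hPx1, hx1, h0, hy0]

lemma lev_one_eq_of_shift_two (M : IsRotationMatching side lev o P) {x y : ι}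
    (hside : side x ≠ side y) (h0 : lev x 0 = lev y 0)
    (hx : lev x 0 = o ∧ lev (P x) 1 = o ∧ lev (P x) 0 = lev x 1)
    (hy : lev y 0 = o ∧ lev (P y) 1 = o ∧ lev (P y) 0 = lev y 1) : lev x 1 = lev y 1 := by
  obtain ⟨hx0, hPx1, hPx0⟩ := hx
  obtain ⟨hy0, hPy1, hPy0⟩ := hy
  have hPside : side (P x) ≠ side (P y) := fun hs => hside <| by
    rw [← M.involutive x, M.injOn_one _ _ hs (hPx1.trans hPy1.symm), M.involutive]
  obtain ⟨z, hzside, hz0⟩ := M.exists_lev_zero_eq (P x) (side (P y))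
  rcases M.partner_cases z with ⟨hPz0, -⟩ | ⟨-, hPz0, hPz1⟩ | ⟨hz0', -, -⟩
  · have hPzx : P z = P x := M.partner_eq (by rwa [hzside, ne_comm]) hz0 hPz0
    have hzx : z = x := by rw [← M.involutive z, hPzx, M.involutive]
    subst hzx
    rw [← M.partner_eq hside h0 hz0.symm, hPx1, ← hPx0, ← hz0, hx0]
  · by_cases hs : side (P z) = side y
    · rw [← M.injOn_zero _ _ hs (hPz0.trans hy0.symm), hPz1, hz0, hPx0]
    · have hPzx : P z = x := M.injOn_zero _ _ (by omega) (hPz0.trans hx0.symm)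
      exact absurd (by rw [← hPzx, M.involutive, hzside]) hPside
  · rw [← M.partner_eq hside h0 (by rw [← hz0, hz0', hx0]), hPx1, ← hPx0, ← hz0, hz0']

theorem lev_one_eq (M : IsRotationMatching side lev o P) {x y : ι} (hside : side x ≠ side y)
    (h0 : lev x 0 = lev y 0) : lev x 1 = lev y 1 := by
  rcases M.partner_cases x with ⟨hPx0, hPx1⟩ | hx | hx
  · rw [← M.partner_eq hside h0 hPx0, hPx1]
  · exact M.lev_one_eq_of_shift_one hside h0 hx
  rcases M.partner_cases y with ⟨hPy0, hPy1⟩ | hy | hy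
  · rw [← M.partner_eq (Ne.symm hside) h0.symm hPy0, hPy1]
  · exact (M.lev_one_eq_of_shift_one (Ne.symm hside) h0.symm hy).symm
  · exact M.lev_one_eq_of_shift_two hside h0 hx hy

end IsRotationMatching

/-- `cell (s, t) w` is the element in position `w` of the block `t + k s`; for `w < 2` it lies
in row `t + 1` and column `K_{2w+s+1}` of `T`, and `F` only changes `s`. -/
def cell {k : ℕ} (x : Fin 2 × Fin k) (w : Fin 3) : Fin (6 * k) := blk (finProdFinEquiv x) w

lemma cell_val {k : ℕ} (x : Fin 2 × Fin k) (w : Fin 3) :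
    (cell x w).val = 3 * (x.2.val + k * x.1.val) + w.val := by
  simp [cell, blk]

lemma cell_mem_colK_iff {k : ℕ} (x : Fin 2 × Fin k) (w : Fin 3) (l : Fin 4) :
    cell x w ∈ colK k l ↔ w.val = l.val / 2 ∧ x.1.val = l.val % 2 := by
  obtain ⟨s, t, ht⟩ := x
  have hw := w.isLt
  rcases (by omega : s.val = 0 ∨ s.val = 1) with hs | hs <;> fin_cases l <;>
    simp only [colK, Set.mem_ofPred_eq, cell_val, hs, mul_zero, mul_one, and_true] <;> constructor <;>
    first | rintro ⟨u, hu, h⟩; omega | intro h; exact ⟨t, ht, by omega⟩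

lemma exists_cell_eq {k : ℕ} (a : Fin (6 * k)) : ∃ x w, cell x w = a := by
  refine ⟨finProdFinEquiv.symm ⟨a.val / 3, by omega⟩, ⟨a.val % 3, by omega⟩, Fin.ext ?_⟩
  simp only [cell, Equiv.apply_symm_apply, blk]
  omega

lemma rowIdx_cell {k : ℕ} (x : Fin 2 × Fin k) (w : Fin 3) :
    rowIdx k (cell x w) = if w = 2 then 1 else x.2.val + 1 := by
  obtain ⟨⟨s, hs⟩, ⟨t, ht⟩⟩ := x
  have hmod : (cell (⟨s, hs⟩, ⟨t, ht⟩) w).val % (3 * k) = 3 * t + w.val := by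
    rw [cell_val, show 3 * (t + k * s) + w.val = 3 * t + w.val + 3 * k * s by ring,
      Nat.add_mul_mod_self_left, Nat.mod_eq_of_lt (by omega)]
  rw [rowIdx, hmod]
  fin_cases w <;> simp only [Fin.reduceFinMk, Fin.isValue] <;> split_ifs <;> omega

lemma Fperm_cell {k : ℕ} (s : Fin 2) (t : Fin k) (w : Fin 3) :
    Fperm k (cell (s, t) w) = cell (s + 1, t) w := by
  apply Fin.ext
  change (Ffun k (cell (s, t) w)).val = _
  have := t.isLt
  obtain rfl | rfl : s = 0 ∨ s = 1 := by omega
  all_goals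
    simp only [Ffun, cell_val, Fin.isValue, Fin.reduceAdd]
    split <;> simp only [Fin.coe_ofNat_eq_mod, Nat.zero_mod, Nat.mod_succ, mul_zero, mul_one,
      add_zero] <;> omega

lemma rowIdx_Fperm {k : ℕ} (a : Fin (6 * k)) : rowIdx k (Fperm k a) = rowIdx k a := by
  obtain ⟨⟨s, t⟩, w, rfl⟩ := exists_cell_eq a
  simp [Fperm_cell, rowIdx_cell]

def colIdx (p s : Fin 2) : Fin 4 := ⟨2 * p.val + s.val, by omega⟩

lemma cell_mem_colIdx_iff {k : ℕ} (x : Fin 2 × Fin k) (w : Fin 3) (p s : Fin 2) :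
    cell x w ∈ colK k (colIdx p s) ↔ w = p.castSucc ∧ x.1 = s := by
  simp only [cell_mem_colK_iff, colIdx, Fin.ext_iff, Fin.val_castSucc]
  omega

lemma Cgrp_apply_cell_of_ne {k : ℕ} {c : Perm (Fin (6 * k))} {l : Fin 4} (hc : c ∈ Cgrp k l)
    {p s : Fin 2} (h : colIdx p s ≠ l) (t : Fin k) :
    c (cell (s, t) p.castSucc) = cell (s, t) p.castSucc := by
  refine hc _ fun hmem => h ?_
  simp only [cell_mem_colK_iff, Fin.val_castSucc] at hmem
  simp only [colIdx, Fin.ext_iff]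
  omega

lemma Cgrp_apply_cell_two {k : ℕ} {c : Perm (Fin (6 * k))} {l : Fin 4} (hc : c ∈ Cgrp k l)
    (x : Fin 2 × Fin k) : c (cell x 2) = cell x 2 :=
  hc _ fun hmem => by rw [cell_mem_colK_iff] at hmem; omega

lemma exists_colPerm_of_mem_Cgrp {k : ℕ} {c : Perm (Fin (6 * k))} {p s : Fin 2}
    (hc : c ∈ Cgrp k (colIdx p s)) :
    ∃ α : Perm (Fin k), sign α = sign c ∧
      ∀ t, c (cell (s, t) p.castSucc) = cell (s, α t) p.castSucc := by
  classical
  have hbij : Function.Bijective fun t : Fin k =>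
      (⟨cell (s, t) p.castSucc, (cell_mem_colIdx_iff _ _ _ _).2 ⟨rfl, rfl⟩⟩ :
        {a // a ∈ colK k (colIdx p s)}) := by
    refine ⟨fun t u htu => ?_, fun ⟨a, ha⟩ => ?_⟩
    · have := congrArg (fun a => (Subtype.val a).val) htu
      simp only [cell_val] at this
      exact Fin.ext (by omega)
    · obtain ⟨⟨s', t⟩, w, rfl⟩ := exists_cell_eq a
      obtain ⟨rfl, rfl⟩ := (cell_mem_colIdx_iff _ _ _ _).1 ha
      exact ⟨t, rfl⟩
  obtain ⟨α, hsign, hα⟩ := exists_sign_eq_of_fixed_off (Equiv.ofBijective _ hbij) hc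
  exact ⟨α, hsign, hα⟩

lemma exists_colPerm_of_mem_Cset {k : ℕ} {c : Perm (Fin (6 * k))} (hc : c ∈ Cset k) :
    ∃ α : Fin 2 → Fin 2 → Perm (Fin k), sign c = ∏ p, ∏ s, sign (α p s) ∧
      (∀ p s t, c (cell (s, t) p.castSucc) = cell (s, α p s t) p.castSucc) ∧
      ∀ x, c (cell x 2) = cell x 2 := by
  obtain ⟨c₁, hc₁, c₂, hc₂, c₃, hc₃, c₄, hc₄, rfl⟩ := hc
  obtain ⟨α₁, hs₁, hα₁⟩ := exists_colPerm_of_mem_Cgrp (p := 0) (s := 0) hc₁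
  obtain ⟨α₂, hs₂, hα₂⟩ := exists_colPerm_of_mem_Cgrp (p := 0) (s := 1) hc₂
  obtain ⟨α₃, hs₃, hα₃⟩ := exists_colPerm_of_mem_Cgrp (p := 1) (s := 0) hc₃
  obtain ⟨α₄, hs₄, hα₄⟩ := exists_colPerm_of_mem_Cgrp (p := 1) (s := 1) hc₄
  refine ⟨![![α₁, α₂], ![α₃, α₄]], ?_, ?_, fun x => ?_⟩
  · simp [Fin.prod_univ_two, hs₁, hs₂, hs₃, hs₄, mul_assoc]
  · simp only [Fin.forall_fin_two]
    refine ⟨⟨fun t => ?_, fun t => ?_⟩, fun t => ?_, fun t => ?_⟩ <;>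
      simp (disch := decide) only [Perm.mul_apply, Cgrp_apply_cell_of_ne hc₁,
        Cgrp_apply_cell_of_ne hc₂, Cgrp_apply_cell_of_ne hc₃, Cgrp_apply_cell_of_ne hc₄,
        hα₁, hα₂, hα₃, hα₄, Matrix.cons_val_zero, Matrix.cons_val_one]
  · simp [Cgrp_apply_cell_two hc₁, Cgrp_apply_cell_two hc₂, Cgrp_apply_cell_two hc₃,
      Cgrp_apply_cell_two hc₄]

lemma exists_apply_cell_of_mem_Qset {k : ℕ} {q : Perm (Fin (6 * k))} (hq : q ∈ Qset k) :
    ∃ (π : Perm (Fin 2 × Fin k)) (sh : Fin 2 × Fin k → Fin 3),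
      ∀ x w, q (cell x w) = cell (π x) (w + sh x) := by
  obtain ⟨b, hb, d, ⟨π, hπ⟩, rfl⟩ := hq
  choose sh hsh using hb
  refine ⟨(finProdFinEquiv.trans π).trans finProdFinEquiv.symm,
    fun x => sh (π (finProdFinEquiv x)), fun x w => ?_⟩
  simp only [cell, Perm.mul_apply, Equiv.trans_apply, Equiv.apply_symm_apply, hπ, hsh]

lemma exists_conj_Fperm_apply_cell {k : ℕ} {q : Perm (Fin (6 * k))} (hq : q ∈ Qset k) :
    ∃ P : Fin 2 × Fin k → Fin 2 × Fin k, Function.Involutive P ∧ (∀ x, P x ≠ x) ∧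
      ∀ x, ∃ d : Fin 3, ∀ w, (q * Fperm k * q⁻¹) (cell x w) = cell (P x) (w + d) := by
  obtain ⟨π, sh, hq⟩ := exists_apply_cell_of_mem_Qset hq
  let flip (y : Fin 2 × Fin k) : Fin 2 × Fin k := (y.1 + 1, y.2)
  refine ⟨fun x => π (flip (π⁻¹ x)), fun x => ?_, fun x hx => ?_, fun x =>
    ⟨sh (flip (π⁻¹ x)) - sh (π⁻¹ x), fun w => ?_⟩⟩
  · have h2 : ∀ a : Fin 2, a + 1 + 1 = a := by decide
    simp [flip, h2]
  · have := congrArg (fun y => (π⁻¹ y).1) hx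
    simp [flip] at this
  · have hx : cell x w = q (cell (π⁻¹ x) (w - sh (π⁻¹ x))) := by simp [hq]
    rw [hx, Perm.mul_apply, Perm.mul_apply, Perm.coe_inv, Equiv.symm_apply_apply, Fperm_cell, hq,
      sub_add_eq_add_sub, add_sub_assoc]

lemma rowIdx_inv_apply_conj_Fperm {k : ℕ} {r : Perm (Fin (6 * k))} (hr : r ∈ Rset k)
    (c : Perm (Fin (6 * k))) (a : Fin (6 * k)) :
    rowIdx k (c⁻¹ ((c * r * Fperm k * (c * r)⁻¹) a)) = rowIdx k (c⁻¹ a) := by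
  have hr' := hr (r⁻¹ (c⁻¹ a))
  simp only [Perm.mul_apply, mul_inv_rev, Perm.coe_inv, Equiv.symm_apply_apply,
    Equiv.apply_symm_apply] at hr' ⊢
  rw [hr, rowIdx_Fperm, ← hr']

lemma rowIdx_inv_apply_cell {k : ℕ} {c : Perm (Fin (6 * k))} {α : Perm (Fin k)} {p s : Fin 2}
    (hα : ∀ t, c (cell (s, t) p.castSucc) = cell (s, α t) p.castSucc) (t : Fin k) :
    rowIdx k (c⁻¹ (cell (s, t) p.castSucc)) = (α⁻¹ t).val + 1 := by
  have : c⁻¹ (cell (s, t) p.castSucc) = cell (s, α⁻¹ t) p.castSucc := by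
    rw [Perm.inv_eq_iff_eq, hα, Perm.coe_inv, Equiv.apply_symm_apply]
  rw [this, rowIdx_cell, if_neg (by exact (Fin.castSucc_lt_last p).ne)]

lemma isRotationMatching_rowIdx_inv {k : ℕ} {c : Perm (Fin (6 * k))}
    {α : Fin 2 → Fin 2 → Perm (Fin k)}
    (hα : ∀ p s t, c (cell (s, t) p.castSucc) = cell (s, α p s t) p.castSucc)
    (hα2 : ∀ x, c (cell x 2) = cell x 2) {P : Fin 2 × Fin k → Fin 2 × Fin k}
    (hPP : Function.Involutive P) (hPne : ∀ x, P x ≠ x)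
    (hrot : ∀ x, ∃ d : Fin 3, ∀ w,
      rowIdx k (c⁻¹ (cell (P x) (w + d))) = rowIdx k (c⁻¹ (cell x w))) :
    IsRotationMatching Prod.fst (fun x w => rowIdx k (c⁻¹ (cell x w))) 1 P := by
  have hinj (p : Fin 2) (x y : Fin 2 × Fin k) (hs : x.1 = y.1)
      (h : rowIdx k (c⁻¹ (cell x p.castSucc)) = rowIdx k (c⁻¹ (cell y p.castSucc))) : x = y := by
    obtain ⟨s, t⟩ := x; obtain ⟨s', t'⟩ := y
    obtain rfl : s = s' := hs
    rw [rowIdx_inv_apply_cell (hα p s), rowIdx_inv_apply_cell (hα p s), add_left_inj,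
      Fin.val_inj, (α p s)⁻¹.injective.eq_iff] at h
    rw [h]
  refine ⟨fun x => ?_, hinj 0, hinj 1, fun ⟨s₀, t⟩ s => ⟨(s, α 0 s ((α 0 s₀)⁻¹ t)), rfl, ?_⟩,
    hPP, hPne, hrot⟩
  · simp only [Perm.inv_eq_iff_eq.mpr (hα2 x).symm, rowIdx_cell, if_pos]
  · change rowIdx k (c⁻¹ (cell _ (Fin.castSucc 0))) = rowIdx k (c⁻¹ (cell _ (Fin.castSucc 0)))
    rw [rowIdx_inv_apply_cell (hα 0 s), rowIdx_inv_apply_cell (hα 0 s₀), Perm.coe_inv,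
      Equiv.symm_apply_apply]

lemma mul_inv_eq_of_isRotationMatching {k : ℕ} {c : Perm (Fin (6 * k))}
    {α : Fin 2 → Fin 2 → Perm (Fin k)}
    (hα : ∀ p s t, c (cell (s, t) p.castSucc) = cell (s, α p s t) p.castSucc)
    {P : Fin 2 × Fin k → Fin 2 × Fin k}
    (M : IsRotationMatching Prod.fst (fun x w => rowIdx k (c⁻¹ (cell x w))) 1 P) :
    α 0 1 * (α 0 0)⁻¹ = α 1 1 * (α 1 0)⁻¹ := by
  ext t
  have h0 := rowIdx_inv_apply_cell (hα 0 0) t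
  have h0' := rowIdx_inv_apply_cell (hα 0 1) (α 0 1 ((α 0 0)⁻¹ t))
  rw [Perm.coe_inv (α 0 1), Equiv.symm_apply_apply, ← h0] at h0'
  have h1 := M.lev_one_eq (x := (0, t)) (y := (1, α 0 1 ((α 0 0)⁻¹ t))) (by simp) h0'.symm
  change rowIdx k (c⁻¹ (cell _ (Fin.castSucc 1))) = rowIdx k (c⁻¹ (cell _ (Fin.castSucc 1))) at h1
  rw [rowIdx_inv_apply_cell (hα 1 0), rowIdx_inv_apply_cell (hα 1 1), add_left_inj,
    Fin.val_inj] at h1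
  rw [Perm.mul_apply, Perm.mul_apply, h1]
  simp only [Perm.coe_inv, Equiv.apply_symm_apply]

theorem stmt5_general (k : ℕ) (q c r : Equiv.Perm (Fin (6 * k)))
    (hq : q ∈ Qset k) (hc : c ∈ Cset k) (hr : r ∈ Rset k)
    (h : q * Fperm k * q⁻¹ = (c * r) * Fperm k * (c * r)⁻¹) :
    Equiv.Perm.sign c = 1 := by
  obtain ⟨P, hPP, hPne, hProt⟩ := exists_conj_Fperm_apply_cell hq
  obtain ⟨α, hsign, hα, hα2⟩ := exists_colPerm_of_mem_Cset hc
  have M := isRotationMatching_rowIdx_inv hα hα2 hPP hPne fun x =>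
    (hProt x).imp fun d hd w => by rw [← hd, h, rowIdx_inv_apply_conj_Fperm hr]
  rw [hsign, Fin.prod_univ_two, Fin.prod_univ_two, Fin.prod_univ_two,
    ← map_mul_mul_mul_eq_one_of_mul_inv_eq sign (mul_inv_eq_of_isRotationMatching hα M)]
  ac_rfl

theorem stmt5 (k : ℕ) (hk : 1 ≤ k) (q c r : Equiv.Perm (Fin (6 * k)))
    (hq : q ∈ Qset k) (hc : c ∈ Cset k) (hr : r ∈ Rset k)
    (h : q * Fperm k * q⁻¹ = (c * r) * Fperm k * (c * r)⁻¹) :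
    Equiv.Perm.sign c = 1 :=
  stmt5_general k q c r hq hc hr h
end
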